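/- An n-dimensional complex Zinbiel algebra A is generated as an algebra by a single element if and only if A is isomorphic to NF_n. -/

import Mathlib

/-!
The powers `p_k = x ∘ (x ∘ ⋯ ∘ x)` of one element multiply like the basis of `NF_n`:
`p_i ∘ p_j = C(i+j+1, j+1) p_{i+j+1}`, by induction on `i + j` from the Zinbiel identity, so
they span the subalgebra generated by `x`. The operator `y ↦ y ∘ x - c (x ∘ y)` sends `p_k` to
`(k + 1 - c) p_{k+1}`; choosing `c` to kill the top term of a linear relation shows that
nonzero powers `p_a, …, p_{a+m}` are linearly independent. Hence `p_n = 0` in dimension `n`, and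
`p_0, …, p_{n-1}` is an `NF_n` basis when `x` generates. Conversely `e_1` generates `NF_n`, since
`e_1 ∘ e_k = e_{k+1}`.
-/

/-- A complex Zinbiel algebra structure on the module `A`: a bilinear
multiplication satisfying `(x∘y)∘z = x∘(y∘z) + x∘(z∘y)`. -/
structure ZinbielStr (A : Type*) [AddCommGroup A] [Module ℂ A] where
  mul : A →ₗ[ℂ] A →ₗ[ℂ] A
  zinbiel : ∀ x y z : A, mul (mul x y) z = mul x (mul y z) + mul x (mul z y)

namespace ZinbielStr

variable {A : Type*} [AddCommGroup A] [Module ℂ A]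

/-- `M.lcs k` is the term `A^k` of the lower central series for `k ≥ 1`
(`A^1 = A`, `A^{k+1} = span (A ∘ A^k)`), with the convention `M.lcs 0 = ⊤`. -/
def lcs (M : ZinbielStr A) : ℕ → Submodule ℂ A
  | 0 => ⊤
  | 1 => ⊤
  | k + 2 => Submodule.span ℂ {z | ∃ a b, b ∈ lcs M (k + 1) ∧ z = M.mul a b}

/-- A Zinbiel algebra is nilpotent when some term of the lower central series vanishes. -/
def IsNilpotent (M : ZinbielStr A) : Prop := ∃ s, 1 ≤ s ∧ M.lcs s = ⊥

/-- `M.leftPow x k = x ∘ (x ∘ ⋯ (x ∘ x))` with `k + 1` factors; it plays the role of `e_{k+1}`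
in `NF_n`. -/
def leftPow (M : ZinbielStr A) (x : A) : ℕ → A
  | 0 => x
  | k + 1 => M.mul x (M.leftPow x k)

section leftPow

variable (M : ZinbielStr A) (x : A)

theorem mul_leftPow (i j : ℕ) :
    M.mul (M.leftPow x i) (M.leftPow x j) =
      ((i + j + 1).choose (j + 1) : ℂ) • M.leftPow x (i + j + 1) := by
  suffices ∀ s i j, i + j < s → M.mul (M.leftPow x i) (M.leftPow x j) =
      ((i + j + 1).choose (j + 1) : ℂ) • M.leftPow x (i + j + 1) from
    this (i + j + 1) i j (by omega)
  intro s
  induction s with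
  | zero => intro i j h; omega
  | succ s ih =>
    rintro (_ | i) j h
    · simp [leftPow]
    · have hchoose : (i + 1 + j + 1).choose (j + 1) =
          (i + j + 1).choose (j + 1) + (j + i + 1).choose (i + 1) := by
        rw [add_comm j i, show i + j + 1 = (i + 1) + j by omega, Nat.choose_symm_add,
          show i + 1 + j + 1 = (i + 1 + j) + 1 by omega, Nat.choose_succ_succ', add_comm]
      calc M.mul (M.leftPow x (i + 1)) (M.leftPow x j)
          = M.mul x (M.mul (M.leftPow x i) (M.leftPow x j)) +
              M.mul x (M.mul (M.leftPow x j) (M.leftPow x i)) := M.zinbiel _ _ _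
        _ = _ := by
          rw [ih i j (by omega), ih j i (by omega), map_smul, map_smul, hchoose, Nat.cast_add,
            add_smul, add_comm j i, show i + 1 + j + 1 = i + j + 1 + 1 by omega]
          rfl

theorem leftPow_mul_self (k : ℕ) :
    M.mul (M.leftPow x k) x = (k + 1 : ℂ) • M.leftPow x (k + 1) := by
  simpa [leftPow] using M.mul_leftPow x k 0

theorem leftPow_eq_zero_of_le {m k : ℕ} (hm : M.leftPow x m = 0) (hk : m ≤ k) :
    M.leftPow x k = 0 := by
  induction k, hk using Nat.le_induction with
  | base => exact hm
  | succ k _ ih => rw [leftPow, ih, map_zero]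

theorem flip_sub_smul_leftPow (c : ℂ) (k : ℕ) :
    (M.mul.flip x - c • M.mul x) (M.leftPow x k) = (k + 1 - c) • M.leftPow x (k + 1) := by
  rw [LinearMap.sub_apply, LinearMap.flip_apply, leftPow_mul_self, LinearMap.smul_apply,
    sub_smul]
  rfl

theorem linearIndependent_leftPow {m a : ℕ} (h : M.leftPow x (a + m) ≠ 0) :
    LinearIndependent ℂ (fun i : Fin (m + 1) => M.leftPow x (a + i)) := by
  induction m generalizing a with
  | zero => exact linearIndependent_unique_iff (ι := Fin 1).mpr (by simpa using h)
  | succ m ih =>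
    have ih := ih (a := a + 1) (by rwa [add_right_comm])
    rw [Fintype.linearIndependent_iff] at ih ⊢
    intro g hg
    rw [Fin.sum_univ_castSucc] at hg
    have hshift := congrArg (M.mul.flip x - ((a + m + 2 : ℕ) : ℂ) • M.mul x) hg
    simp only [map_add, map_sum, map_smul, flip_sub_smul_leftPow, map_zero, smul_smul] at hshift
    have hlow : ∀ i : Fin (m + 1), g i.castSucc = 0 := by
      intro i
      have hi : ((i : ℕ) : ℂ) - (m + 1) ≠ 0 := by
        rw [sub_ne_zero]; exact_mod_cast i.isLt.ne
      refine (mul_eq_zero.mp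
        (ih (fun i => g i.castSucc * ((i : ℂ) - (m + 1))) ?_ i)).resolve_right hi
      rw [← hshift]
      simp only [Fin.val_last, Fin.val_castSucc]
      push_cast
      rw [show (a : ℂ) + (m + 1) + 1 - (a + m + 2) = 0 by ring, mul_zero, zero_smul, add_zero]
      refine Finset.sum_congr rfl fun i _ => ?_
      rw [add_right_comm]
      congr 2
      ring
    rw [Finset.sum_eq_zero fun i _ => by rw [hlow i, zero_smul], zero_add,
      smul_eq_zero] at hg
    intro i
    induction i using Fin.lastCases with
    | last => exact hg.resolve_right h
    | cast i => exact hlow i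

theorem leftPow_finrank_eq_zero [FiniteDimensional ℂ A] :
    M.leftPow x (Module.finrank ℂ A) = 0 := by
  by_contra h
  have := (M.linearIndependent_leftPow x (a := 0) (by simpa using h)).fintype_card_le_finrank
  simp at this

theorem leftPow_mem {S : Submodule ℂ A} (hS : ∀ a ∈ S, ∀ b ∈ S, M.mul a b ∈ S) (hx : x ∈ S)
    (k : ℕ) : M.leftPow x k ∈ S := by
  induction k with
  | zero => exact hx
  | succ k ih => exact hS _ hx _ ih

theorem mul_mem_span_leftPow {a b : A} (ha : a ∈ Submodule.span ℂ (Set.range (M.leftPow x)))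
    (hb : b ∈ Submodule.span ℂ (Set.range (M.leftPow x))) :
    M.mul a b ∈ Submodule.span ℂ (Set.range (M.leftPow x)) := by
  refine Submodule.map₂_le.mp ?_ a ha b hb
  rw [Submodule.map₂_span_span, Submodule.span_le]
  rintro _ ⟨_, ⟨i, rfl⟩, _, ⟨j, rfl⟩, rfl⟩
  dsimp only
  rw [mul_leftPow]
  exact Submodule.smul_mem _ _ (Submodule.subset_span ⟨_, rfl⟩)

theorem span_range_leftPow_fin {n : ℕ} (h : M.leftPow x n = 0) :
    Submodule.span ℂ (Set.range fun i : Fin n => M.leftPow x i) =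
      Submodule.span ℂ (Set.range (M.leftPow x)) := by
  refine le_antisymm (Submodule.span_mono ?_) (Submodule.span_le.mpr ?_)
  · rintro _ ⟨i, rfl⟩
    exact ⟨i, rfl⟩
  · rintro _ ⟨k, rfl⟩
    by_cases hk : k < n
    · exact Submodule.subset_span ⟨⟨k, hk⟩, rfl⟩
    · rw [M.leftPow_eq_zero_of_le x h (not_lt.mp hk)]
      exact Submodule.zero_mem _

theorem exists_basis_eq_leftPow [FiniteDimensional ℂ A]
    (hspan : Submodule.span ℂ (Set.range (M.leftPow x)) = ⊤) :
    ∃ e : Module.Basis (Fin (Module.finrank ℂ A)) ℂ A, ∀ i, e i = M.leftPow x i := by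
  have htop :
      ⊤ ≤ Submodule.span ℂ (Set.range fun i : Fin (Module.finrank ℂ A) => M.leftPow x i) := by
    rw [M.span_range_leftPow_fin x (M.leftPow_finrank_eq_zero x), hspan]
  exact ⟨basisOfTopLeSpanOfCardEqFinrank _ htop (Fintype.card_fin _),
    fun i => by rw [coe_basisOfTopLeSpanOfCardEqFinrank]⟩

end leftPow

theorem eq_leftPow_of_mul_eq (M : ZinbielStr A) {n : ℕ} (v : Fin (n + 1) → A)
    (hv : ∀ k (hk : k + 1 < n + 1), M.mul (v 0) (v ⟨k, by omega⟩) = v ⟨k + 1, hk⟩) :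
    ∀ k (hk : k < n + 1), v ⟨k, hk⟩ = M.leftPow (v 0) k
  | 0, _ => rfl
  | k + 1, hk => by rw [leftPow, ← eq_leftPow_of_mul_eq M v hv k (by omega), hv]


/-- An `n`-dimensional complex Zinbiel algebra is generated by a single element
iff it is isomorphic to `NF_n`. -/
theorem one_generated_iff_NF {A : Type*} [AddCommGroup A] [Module ℂ A]
    [FiniteDimensional ℂ A] (M : ZinbielStr A) (n : ℕ)
    (hdim : Module.finrank ℂ A = n) :
    (∃ x : A, ∀ S : Submodule ℂ A,
        (∀ a ∈ S, ∀ b ∈ S, M.mul a b ∈ S) → x ∈ S → S = ⊤) ↔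
    (∃ e : Module.Basis (Fin n) ℂ A, ∀ i j : Fin n,
      M.mul (e i) (e j) =
        if h : (i : ℕ) + (j : ℕ) + 2 ≤ n then
          (((i : ℕ) + (j : ℕ) + 1).choose ((j : ℕ) + 1) : ℂ) •
            e ⟨(i : ℕ) + (j : ℕ) + 1, by omega⟩
        else 0) := by
  constructor
  · rintro ⟨x, hx⟩
    subst hdim
    obtain ⟨e, he⟩ := M.exists_basis_eq_leftPow x
      (hx _ (fun a ha b hb => M.mul_mem_span_leftPow x ha hb) (Submodule.subset_span ⟨0, rfl⟩))
    refine ⟨e, fun i j => ?_⟩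
    simp only [he, mul_leftPow]
    split_ifs with h
    · rfl
    · rw [M.leftPow_eq_zero_of_le x (M.leftPow_finrank_eq_zero x) (by omega), smul_zero]
  · rintro ⟨e, he⟩
    rcases n with _ | n
    · have : Subsingleton A := Module.finrank_zero_iff.mp hdim
      exact ⟨0, fun S _ _ => Subsingleton.elim _ _⟩
    · have hpow := M.eq_leftPow_of_mul_eq e fun k hk => by
        simpa [Nat.lt_of_succ_lt_succ hk] using he 0 ⟨k, by omega⟩
      refine ⟨e 0, fun S hS hx => ?_⟩
      rw [eq_top_iff, ← e.span_eq, Submodule.span_le]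
      rintro _ ⟨⟨k, hk⟩, rfl⟩
      rw [hpow k hk]
      exact M.leftPow_mem (e 0) hS hx k

end ZinbielStr
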